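/- Let ρ0 and ρ1 be density matrices on ℂ^n, let τ > 0, let A = ρ1 − τ·ρ0, and let P* be the orthogonal projection onto the span of the eigenvectors of A with strictly positive eigenvalues. Let w : [0,1] → ℝ be monotone nondecreasing, let p0, p1 ∈ [0,1], and let u01, u10 > 0 and u00, u11 < 0 be real constants. For a measurement operator P define the weighted risk u(P) = w(p0·Tr(P·ρ0))·u01 + w(p1·Tr(P·ρ1))·u11 + w(p0·(1 − Tr(P·ρ0)))·u00 + w(p1·(1 − Tr(P·ρ1)))·u10. Then for every measurement operator P' with 0 ≤ P' ≤ I whose detection rate equals that of P*, i.e., Tr(P'·ρ1) = Tr(P*·ρ1), one has u(P*) ≤ u(P'). That is, the quantum likelihood-ratio test P* achieves minimal weighted risk among all measurements with the same detection rate. -/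

import Mathlib

open Matrix ComplexOrder

/-- A density matrix on ℂ^n: Hermitian, positive semidefinite, trace 1. -/
def Matrix.IsDensityMatrix {n : ℕ} (ρ : Matrix (Fin n) (Fin n) ℂ) : Prop :=
  ρ.IsHermitian ∧ ρ.PosSemidef ∧ ρ.trace = 1

/-- A measurement operator: Hermitian `P` with `0 ≤ P ≤ I`, i.e. both `P` and
`1 - P` are positive semidefinite. -/
def Matrix.IsMeasurement {n : ℕ} (P : Matrix (Fin n) (Fin n) ℂ) : Prop :=
  P.IsHermitian ∧ P.PosSemidef ∧ (1 - P).PosSemidef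

/-- The orthogonal projection onto the span of the eigenvectors of a Hermitian
matrix `A` with strictly positive eigenvalues,
`P* = Σ_{η_j > 0} |η_j⟩⟨η_j|` in terms of a spectral decomposition of `A`. -/
noncomputable def Matrix.IsHermitian.posEigenProj {n : ℕ}
    {A : Matrix (Fin n) (Fin n) ℂ} (hA : A.IsHermitian) : Matrix (Fin n) (Fin n) ℂ :=
  (hA.eigenvectorUnitary : Matrix (Fin n) (Fin n) ℂ) *
    Matrix.diagonal (fun j => if 0 < hA.eigenvalues j then (1 : ℂ) else 0) *
    star (hA.eigenvectorUnitary : Matrix (Fin n) (Fin n) ℂ)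

/-!
On measurements `0 ≤ P ≤ 1`, the functional `P ↦ re Tr(P A)` is maximized by `P*`: in an
eigenbasis of `A` it reads `∑ⱼ λⱼ xⱼ` where the `xⱼ ∈ [0, 1]` are the diagonal entries of the
conjugated `P`, and `P*` takes `xⱼ = 1` exactly when `λⱼ > 0`. Since
`Tr(P A) = Tr(P ρ1) - τ Tr(P ρ0)`, among measurements with the detection rate of `P*` none has
a smaller false alarm rate (quantum Neyman–Pearson). In the weighted risk the `ρ1` terms then
coincide, and the `ρ0` terms are nondecreasing in the false alarm rate because `w` is monotone,
`u01 > 0` and `u00 < 0`.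
-/

namespace Matrix
variable {m 𝕜 : Type*} [DecidableEq m] [RCLike 𝕜]

lemma re_diag_mem_Icc {Q : Matrix m m 𝕜} (hQ : Q.PosSemidef) (hQ1 : (1 - Q).PosSemidef) (j : m) :
    RCLike.re (Q j j) ∈ Set.Icc (0 : ℝ) 1 := by
  have h0 := (RCLike.nonneg_iff.mp (hQ.diag_nonneg (i := j))).1
  have h1 := (RCLike.nonneg_iff.mp (hQ1.diag_nonneg (i := j))).1
  simp only [sub_apply, one_apply_eq, map_sub, RCLike.one_re] at h1
  exact ⟨h0, by linarith⟩

variable [Fintype m]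

lemma re_diag_star_conj_mem_Icc {U Q : Matrix m m 𝕜} (hU : U ∈ unitaryGroup m 𝕜)
    (hQ : Q.PosSemidef) (hQ1 : (1 - Q).PosSemidef) (j : m) :
    RCLike.re ((star U * Q * U) j j) ∈ Set.Icc (0 : ℝ) 1 := by
  refine re_diag_mem_Icc (hQ.conjTranspose_mul_mul_same U) ?_ j
  have : 1 - star U * Q * U = Uᴴ * (1 - Q) * U := by
    rw [mul_sub, sub_mul, mul_one, ← star_eq_conjTranspose, (mem_unitaryGroup_iff').mp hU]
  exact this ▸ hQ1.conjTranspose_mul_mul_same U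

lemma re_trace_mul_conj_diagonal (P U : Matrix m m 𝕜) (d : m → ℝ) :
    RCLike.re (P * (U * diagonal (RCLike.ofReal ∘ d) * star U)).trace =
      ∑ j, d j * RCLike.re ((star U * P * U) j j) := by
  rw [← mul_assoc, ← mul_assoc, trace_mul_comm, ← mul_assoc, ← mul_assoc]
  simp [trace, mul_diagonal, mul_comm]

lemma IsHermitian.re_trace_mul_eq_sum {A : Matrix m m 𝕜} (hA : A.IsHermitian) (P : Matrix m m 𝕜) :
    RCLike.re (P * A).trace = ∑ j, hA.eigenvalues j * RCLike.re
      ((star (hA.eigenvectorUnitary : Matrix m m 𝕜) * P * hA.eigenvectorUnitary) j j) := by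
  conv_lhs => rw [hA.spectral_theorem, Unitary.conjStarAlgAut_apply]
  exact re_trace_mul_conj_diagonal _ _ _

lemma PosSemidef.re_trace_mul_nonneg {P ρ : Matrix m m 𝕜} (hP : P.PosSemidef) (hρ : ρ.PosSemidef) :
    0 ≤ RCLike.re (P * ρ).trace := by
  rw [hρ.isHermitian.re_trace_mul_eq_sum]
  refine Finset.sum_nonneg fun j _ ↦ mul_nonneg (hρ.eigenvalues_nonneg j) ?_
  exact (RCLike.nonneg_iff.mp (hP.conjTranspose_mul_mul_same _).diag_nonneg).1

lemma re_trace_mul_mem_Icc {P ρ : Matrix m m 𝕜} (hP : P.PosSemidef) (hP1 : (1 - P).PosSemidef)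
    (hρ : ρ.PosSemidef) (hρtr : ρ.trace = 1) :
    RCLike.re (P * ρ).trace ∈ Set.Icc (0 : ℝ) 1 := by
  have h1 := hP1.re_trace_mul_nonneg hρ
  rw [sub_mul, one_mul, trace_sub, map_sub, hρtr, RCLike.one_re] at h1
  exact ⟨hP.re_trace_mul_nonneg hρ, by linarith⟩

end Matrix

namespace Matrix.IsHermitian
variable {n : ℕ} {A : Matrix (Fin n) (Fin n) ℂ} (hA : A.IsHermitian)

lemma star_eigenvectorUnitary_mul_posEigenProj_mul :
    star (hA.eigenvectorUnitary : Matrix (Fin n) (Fin n) ℂ) * hA.posEigenProj *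
      hA.eigenvectorUnitary =
    diagonal (fun j => if 0 < hA.eigenvalues j then (1 : ℂ) else 0) := by
  simp only [posEigenProj, mul_assoc, Unitary.coe_star_mul_self, mul_one]
  rw [← mul_assoc, Unitary.coe_star_mul_self, one_mul]

lemma isMeasurement_posEigenProj : hA.posEigenProj.IsMeasurement := by
  have hU := Unitary.isUnit_coe (U := hA.eigenvectorUnitary)
  have hPSD : hA.posEigenProj.PosSemidef :=
    hU.posSemidef_star_right_conjugate_iff.mpr (posSemidef_diagonal_iff.mpr fun j => by
      split_ifs <;> simp)
  refine ⟨hPSD.isHermitian, hPSD, ?_⟩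
  have hcompl : 1 - hA.posEigenProj = (hA.eigenvectorUnitary : Matrix (Fin n) (Fin n) ℂ) *
      diagonal (fun j => if 0 < hA.eigenvalues j then (0 : ℂ) else 1) *
      star (hA.eigenvectorUnitary : Matrix (Fin n) (Fin n) ℂ) := by
    have hD : diagonal (fun j => if 0 < hA.eigenvalues j then (0 : ℂ) else 1) =
        1 - diagonal (fun j => if 0 < hA.eigenvalues j then (1 : ℂ) else 0) := by
      rw [← diagonal_one, diagonal_sub]
      congr 1; ext j; split_ifs <;> simp
    rw [hD, mul_sub, sub_mul, mul_one, Unitary.mul_star_self_of_mem hA.eigenvectorUnitary.2,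
      posEigenProj]
  rw [hcompl]
  exact hU.posSemidef_star_right_conjugate_iff.mpr (posSemidef_diagonal_iff.mpr fun j => by
      split_ifs <;> simp)

lemma re_trace_mul_le_re_trace_posEigenProj_mul {P : Matrix (Fin n) (Fin n) ℂ}
    (hP : P.PosSemidef) (hP1 : (1 - P).PosSemidef) :
    (P * A).trace.re ≤ (hA.posEigenProj * A).trace.re := by
  simp only [← RCLike.re_to_complex]
  rw [hA.re_trace_mul_eq_sum, hA.re_trace_mul_eq_sum, star_eigenvectorUnitary_mul_posEigenProj_mul]
  refine Finset.sum_le_sum fun j _ ↦ ?_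
  have hx := re_diag_star_conj_mem_Icc hA.eigenvectorUnitary.2 hP hP1 j
  by_cases hpos : 0 < hA.eigenvalues j
  · simp only [diagonal_apply_eq, hpos, if_true, RCLike.one_re, mul_one]
    nlinarith [hx.2]
  · simp only [diagonal_apply_eq, hpos, if_false, map_zero, mul_zero]
    nlinarith [hx.1]

end Matrix.IsHermitian

lemma monotoneOn_falseAlarmRisk {w : ℝ → ℝ} (hw : MonotoneOn w (Set.Icc 0 1)) {p a b : ℝ}
    (hp : p ∈ Set.Icc (0 : ℝ) 1) (ha : 0 ≤ a) (hb : b ≤ 0) :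
    MonotoneOn (fun x => w (p * x) * a + w (p * (1 - x)) * b) (Set.Icc 0 1) := by
  intro x hx y hy hxy
  have hx' := Set.Icc.mem_iff_one_sub_mem.mp hx
  have hy' := Set.Icc.mem_iff_one_sub_mem.mp hy
  have hwx : w (p * x) ≤ w (p * y) :=
    hw (unitInterval.mul_mem hp hx) (unitInterval.mul_mem hp hy) (by gcongr; exact hp.1)
  have hw1x : w (p * (1 - y)) ≤ w (p * (1 - x)) :=
    hw (unitInterval.mul_mem hp hy') (unitInterval.mul_mem hp hx') (by gcongr; exact hp.1)
  dsimp only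
  nlinarith [mul_le_mul_of_nonneg_right hwx ha, mul_le_mul_of_nonpos_right hw1x hb]

lemma re_trace_posEigenProj_mul_le_of_trace_mul_eq {n : ℕ}
    {ρ0 ρ1 A P : Matrix (Fin n) (Fin n) ℂ} {τ : ℝ} (hτ : 0 < τ) (hAdef : A = ρ1 - (τ : ℂ) • ρ0)
    (hA : A.IsHermitian) (hP : P.PosSemidef) (hP1 : (1 - P).PosSemidef)
    (hdet : (P * ρ1).trace = (hA.posEigenProj * ρ1).trace) :
    (hA.posEigenProj * ρ0).trace.re ≤ (P * ρ0).trace.re := by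
  have hsplit (Q : Matrix (Fin n) (Fin n) ℂ) :
      (Q * A).trace.re = (Q * ρ1).trace.re - τ * (Q * ρ0).trace.re := by
    simp [hAdef, mul_sub, trace_sub]
  have hA_le := hA.re_trace_mul_le_re_trace_posEigenProj_mul hP hP1
  rw [hsplit, hsplit, hdet] at hA_le
  exact le_of_mul_le_mul_left (by linarith) hτ

theorem qlrt_minimal_weighted_risk_general {n : ℕ} (ρ0 ρ1 : Matrix (Fin n) (Fin n) ℂ)
    (hρ0 : ρ0.IsDensityMatrix) (τ : ℝ) (hτ : 0 < τ)
    {A : Matrix (Fin n) (Fin n) ℂ} (hAdef : A = ρ1 - (τ : ℂ) • ρ0) (hA : A.IsHermitian)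
    (w : ℝ → ℝ) (hw : MonotoneOn w (Set.Icc 0 1))
    (p0 p1 : ℝ) (hp0 : p0 ∈ Set.Icc (0 : ℝ) 1)
    (u01 u10 u00 u11 : ℝ) (hu01 : 0 < u01)
    (hu00 : u00 < 0)
    (u : Matrix (Fin n) (Fin n) ℂ → ℝ)
    (hu : ∀ P : Matrix (Fin n) (Fin n) ℂ, u P =
      w (p0 * ((P * ρ0).trace).re) * u01 + w (p1 * ((P * ρ1).trace).re) * u11 +
        w (p0 * (1 - ((P * ρ0).trace).re)) * u00 +
          w (p1 * (1 - ((P * ρ1).trace).re)) * u10)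
    (P' : Matrix (Fin n) (Fin n) ℂ) (hP' : P'.IsMeasurement)
    (hdet : (P' * ρ1).trace = (hA.posEigenProj * ρ1).trace) :
    u hA.posEigenProj ≤ u P' := by
  obtain ⟨-, hρ0psd, hρ0tr⟩ := hρ0
  obtain ⟨-, hP'0, hP'1⟩ := hP'
  obtain ⟨-, hP0, hP1⟩ := hA.isMeasurement_posEigenProj
  have hfalseAlarm :=
    re_trace_posEigenProj_mul_le_of_trace_mul_eq hτ hAdef hA hP'0 hP'1 hdet
  have hmono := monotoneOn_falseAlarmRisk hw hp0 hu01.le hu00.le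
    (re_trace_mul_mem_Icc hP0 hP1 hρ0psd hρ0tr) (re_trace_mul_mem_Icc hP'0 hP'1 hρ0psd hρ0tr)
    hfalseAlarm
  simp only [RCLike.re_to_complex] at hmono
  rw [hu, hu, hdet]
  linarith

/-- The quantum likelihood-ratio projection `P*` (positive-eigenspace
projection of `A = ρ1 - τ • ρ0`, `τ > 0`) achieves minimal weighted risk
`u(P) = w(p0·Tr(P·ρ0))·u01 + w(p1·Tr(P·ρ1))·u11 + w(p0·(1 - Tr(P·ρ0)))·u00 +
w(p1·(1 - Tr(P·ρ1)))·u10` among all measurements `P'` whose detection rate equals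
that of `P*`. -/
theorem qlrt_minimal_weighted_risk {n : ℕ} (ρ0 ρ1 : Matrix (Fin n) (Fin n) ℂ)
    (hρ0 : ρ0.IsDensityMatrix) (hρ1 : ρ1.IsDensityMatrix) (τ : ℝ) (hτ : 0 < τ)
    {A : Matrix (Fin n) (Fin n) ℂ} (hAdef : A = ρ1 - (τ : ℂ) • ρ0) (hA : A.IsHermitian)
    (w : ℝ → ℝ) (hw : MonotoneOn w (Set.Icc 0 1))
    (p0 p1 : ℝ) (hp0 : p0 ∈ Set.Icc (0 : ℝ) 1) (hp1 : p1 ∈ Set.Icc (0 : ℝ) 1)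
    (u01 u10 u00 u11 : ℝ) (hu01 : 0 < u01) (hu10 : 0 < u10)
    (hu00 : u00 < 0) (hu11 : u11 < 0)
    (u : Matrix (Fin n) (Fin n) ℂ → ℝ)
    (hu : ∀ P : Matrix (Fin n) (Fin n) ℂ, u P =
      w (p0 * ((P * ρ0).trace).re) * u01 + w (p1 * ((P * ρ1).trace).re) * u11 +
        w (p0 * (1 - ((P * ρ0).trace).re)) * u00 +
          w (p1 * (1 - ((P * ρ1).trace).re)) * u10)
    (P' : Matrix (Fin n) (Fin n) ℂ) (hP' : P'.IsMeasurement)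
    (hdet : (P' * ρ1).trace = (hA.posEigenProj * ρ1).trace) :
    u hA.posEigenProj ≤ u P' :=
  qlrt_minimal_weighted_risk_general ρ0 ρ1 hρ0 τ hτ hAdef hA w hw p0 p1 hp0 u01 u10 u00 u11 hu01
    hu00 u hu P' hP' hdet
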